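/- Let M be a retractable left R-module whose endomorphism ring End_R(M) is semisimple artinian. Then M is a semisimple artinian R-module (a finite direct sum of simple modules). -/

import Mathlib

/-- A left `R`-module `M` is retractable if `Hom_R(M, N) ≠ 0` for every nonzero
submodule `N` of `M`. -/
def IsRetractable (R M : Type*) [Ring R] [AddCommGroup M] [Module R M] : Prop :=
  ∀ N : Submodule R M, N ≠ ⊥ → ∃ f : M →ₗ[R] M, f ≠ 0 ∧ LinearMap.range f ≤ N

/-!
For a submodule `N`, the endomorphisms with image in `N` form a right ideal of the semisimple
ring `End_R(M)`, hence one generated by an idempotent `e`. Retractability forces `N = range e`: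
a nonzero map `f` into `N ⊓ ker e` would satisfy both `e f = f` and `e f = 0`. So every
submodule is the image of an idempotent, which makes `M` semisimple and makes
`N ↦ {f | range f ≤ N}` an order embedding of the submodules of `M` into the artinian lattice
of right ideals of `End_R(M)`.
-/

open LinearMap MulOpposite

theorem IsSemisimpleRing.exists_isIdempotentElem_mul_eq_of_ideal_mulOpposite
    {A : Type*} [Ring A] [IsSemisimpleRing A] (I : Ideal Aᵐᵒᵖ) :
    ∃ e : A, IsIdempotentElem e ∧ op e ∈ I ∧ ∀ a : A, op a ∈ I → e * a = a := by
  obtain ⟨e, he, rfl⟩ := IsSemisimpleRing.ideal_eq_span_idempotent I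
  refine ⟨e.unop, congrArg unop he, Ideal.mem_span_singleton_self e, fun a ha => ?_⟩
  obtain ⟨c, hc⟩ := Ideal.mem_span_singleton'.mp ha
  rw [← unop_op a, ← hc, unop_mul, ← mul_assoc, ← unop_mul, he]

section Retractable

variable {R M : Type*} [Ring R] [AddCommGroup M] [Module R M]

/-- The right ideal of endomorphisms with image in `N`, as a left ideal of `End_R(M)ᵐᵒᵖ`. -/
def Submodule.endInto (N : Submodule R M) : Ideal (Module.End R M)ᵐᵒᵖ where
  carrier := {f | range f.unop ≤ N}
  zero_mem' := by simp
  add_mem' {f g} hf hg := (range_add_le _ _).trans (sup_le hf hg)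
  smul_mem' c f hf := (range_comp_le_range c.unop f.unop).trans hf

theorem Submodule.mem_endInto {N : Submodule R M} {f : Module.End R M} :
    op f ∈ N.endInto ↔ range f ≤ N :=
  Iff.rfl

theorem IsRetractable.exists_isIdempotentElem_range_eq (hr : IsRetractable R M)
    [IsSemisimpleRing (Module.End R M)] (N : Submodule R M) :
    ∃ e : Module.End R M, IsIdempotentElem e ∧ range e = N := by
  obtain ⟨e, he, heN, hgen⟩ :=
    IsSemisimpleRing.exists_isIdempotentElem_mul_eq_of_ideal_mulOpposite N.endInto
  have hdisj : Disjoint (ker e) N := by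
    rw [disjoint_iff]
    by_contra hne
    obtain ⟨f, hf0, hfN⟩ := hr _ hne
    have hef_eq : e * f = f := hgen f (hfN.trans inf_le_right)
    have hef_zero : e * f = 0 := by
      ext m
      exact (hfN (mem_range_self f m)).1
    exact hf0 (hef_eq ▸ hef_zero)
  exact ⟨e, he, (le_iff_eq_of_codisjoint_of_disjoint he.isCompl.codisjoint hdisj).mp heN⟩

theorem IsRetractable.isSemisimpleModule (hr : IsRetractable R M)
    [IsSemisimpleRing (Module.End R M)] : IsSemisimpleModule R M where
  exists_isCompl N := by
    obtain ⟨e, he, rfl⟩ := hr.exists_isIdempotentElem_range_eq N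
    exact ⟨ker e, he.isCompl⟩

theorem IsRetractable.endInto_le_endInto_iff (hr : IsRetractable R M)
    [IsSemisimpleRing (Module.End R M)] {N N' : Submodule R M} :
    N.endInto ≤ N'.endInto ↔ N ≤ N' := by
  refine ⟨fun h => ?_, fun h f hf => hf.trans h⟩
  obtain ⟨e, -, rfl⟩ := hr.exists_isIdempotentElem_range_eq N
  exact h (Submodule.mem_endInto.mpr le_rfl)

theorem IsRetractable.isArtinian (hr : IsRetractable R M)
    [IsSemisimpleRing (Module.End R M)] : IsArtinian R M :=
  (OrderEmbedding.ofMapLEIff Submodule.endInto fun _ _ => hr.endInto_le_endInto_iff).wellFoundedLT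

end Retractable

theorem retractable_with_semisimple_endomorphism_ring
    {R M : Type*} [Ring R] [AddCommGroup M] [Module R M]
    (hr : IsRetractable R M) (hE : IsSemisimpleRing (Module.End R M)) :
    IsSemisimpleModule R M ∧ IsArtinian R M :=
  ⟨hr.isSemisimpleModule, hr.isArtinian⟩
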